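/- arXiv:2111.10448 — 2 statements merged into one kernel-verified Lean document; each statement's English description precedes it below -/
import Mathlib

section
/- Let X ∈ ℂ^{n₁×n₂×n₃} be a tensor with unfoldings X₁ and X₂, and let 0 < ε < 1. Suppose U₁ ∈ ℂ^{n₁×r₁} and U₂ ∈ ℂ^{(n₁n₂)×r₂} have orthonormal columns with ‖X₁ − U₁U₁*X₁‖_F ≤ (ε/√2)‖X‖_F and ‖X₂ − U₂U₂*X₂‖_F ≤ (ε/√2)‖X‖_F. Define the tensor X̃ entrywise by X̃_{i₁,i₂,i₃} = U₁(i₁,:) · U₁* U₂((i₂−1)n₁+1 : i₂n₁, :) · U₂* X₂(:, i₃). Then ‖X − X̃‖_F ≤ ε‖X‖_F. -/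
/-!
Write `P₁ = U₁U₁ᴴ` and `P₂ = U₂U₂ᴴ`. The first unfolding of `X̃` is `P₁` applied to the first
unfolding of the refolded matrix `P₂X₂`, so the first unfolding of `X - X̃` is
`(X₁ - P₁X₁) + P₁G`, where `G` is the residual `X₂ - P₂X₂` reshaped. As `P₁` is an orthogonal
projection, the two summands are Frobenius-orthogonal and `‖P₁G‖_F ≤ ‖G‖_F = ‖X₂ - P₂X₂‖_F`,
whence `‖X - X̃‖_F² ≤ ‖X₁ - P₁X₁‖_F² + ‖X₂ - P₂X₂‖_F² ≤ ε²‖X‖_F²`.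
-/

open Matrix

/-- Frobenius norm of a complex matrix. -/
noncomputable def frob {m n : Type*} [Fintype m] [Fintype n] (A : Matrix m n ℂ) : ℝ :=
  Real.sqrt (∑ i, ∑ j, ‖A i j‖ ^ 2)

/-- Frobenius norm of a 3-tensor. -/
noncomputable def frobT {n₁ n₂ n₃ : ℕ} (X : Fin n₁ → Fin n₂ → Fin n₃ → ℂ) : ℝ :=
  Real.sqrt (∑ i, ∑ j, ∑ k, ‖X i j k‖ ^ 2)

lemma Real.sqrt_le_sqrt_two_mul_of_le_add {x y z a : ℝ} (h : x ≤ y + z) (hy : √y ≤ a)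
    (hz : √z ≤ a) : √x ≤ √2 * a := by
  have ha : 0 ≤ a := (Real.sqrt_nonneg y).trans hy
  rw [Real.sqrt_le_iff] at hy hz ⊢
  refine ⟨by positivity, ?_⟩
  rw [mul_pow, Real.sq_sqrt zero_le_two]
  linarith [hy.2, hz.2]

namespace Matrix

variable {𝕜 : Type*} [RCLike 𝕜] {m n : Type*} [Fintype m] [Fintype n]

noncomputable def frobSq (A : Matrix m n 𝕜) : ℝ :=
  ∑ i, ∑ j, ‖A i j‖ ^ 2

lemma frobSq_nonneg (A : Matrix m n 𝕜) : 0 ≤ A.frobSq := by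
  unfold frobSq
  positivity

lemma frobSq_eq_re_trace (A : Matrix m n 𝕜) : A.frobSq = RCLike.re (trace (Aᴴ * A)) := by
  simp only [frobSq, trace, diag_apply, mul_apply, conjTranspose_apply, map_sum,
    RCLike.star_def, RCLike.conj_mul]
  rw [Finset.sum_comm]
  norm_cast

lemma frobSq_add_of_conjTranspose_mul_eq_zero {A B : Matrix m n 𝕜} (h : Aᴴ * B = 0) :
    (A + B).frobSq = A.frobSq + B.frobSq := by
  have h' : Bᴴ * A = 0 := by
    rw [← conjTranspose_conjTranspose A, ← conjTranspose_mul, h, conjTranspose_zero]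
  simp only [frobSq_eq_re_trace, conjTranspose_add, Matrix.add_mul, Matrix.mul_add, h, h',
    add_zero, zero_add, trace_add, map_add]

lemma isStarProjection_mul_conjTranspose {r : Type*} [Fintype r] [DecidableEq r]
    {U : Matrix m r 𝕜} (hU : Uᴴ * U = 1) : IsStarProjection (U * Uᴴ) where
  isIdempotentElem := by
    rw [IsIdempotentElem, Matrix.mul_assoc, ← Matrix.mul_assoc Uᴴ, hU, Matrix.one_mul]
  isSelfAdjoint := (isHermitian_mul_conjTranspose_self U).isSelfAdjoint

lemma frobSq_sub_mul_add_mul {P : Matrix m m 𝕜} (hP : IsStarProjection P) (M N : Matrix m n 𝕜) :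
    (M - P * M + P * N).frobSq = (M - P * M).frobSq + (P * N).frobSq := by
  apply frobSq_add_of_conjTranspose_mul_eq_zero
  have hPh : Pᴴ = P := hP.isSelfAdjoint
  rw [conjTranspose_sub, conjTranspose_mul, hPh, Matrix.sub_mul, Matrix.mul_assoc,
    ← Matrix.mul_assoc P P, hP.isIdempotentElem.eq, sub_self]

lemma frobSq_mul_le {P : Matrix m m 𝕜} (hP : IsStarProjection P) (N : Matrix m n 𝕜) :
    (P * N).frobSq ≤ N.frobSq := by
  have h := frobSq_sub_mul_add_mul hP N N
  rw [sub_add_cancel] at h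
  linarith [frobSq_nonneg (N - P * N)]

end Matrix

namespace Tensor3

section Unfoldings

variable {α ι₁ ι₂ ι₃ : Type*}

def unfold₁ (T : ι₁ → ι₂ → ι₃ → α) : Matrix ι₁ (ι₃ × ι₂) α :=
  of fun i p => T i p.2 p.1

def unfold₂ (T : ι₁ → ι₂ → ι₃ → α) : Matrix (ι₂ × ι₁) ι₃ α :=
  of fun p k => T p.2 p.1 k

def fold₂ (A : Matrix (ι₂ × ι₁) ι₃ α) : ι₁ → ι₂ → ι₃ → α :=
  fun i j k => A (j, i) k

lemma fold₂_unfold₂ (T : ι₁ → ι₂ → ι₃ → α) : fold₂ (unfold₂ T) = T := rfl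

lemma unfold₂_fold₂ (A : Matrix (ι₂ × ι₁) ι₃ α) : unfold₂ (fold₂ A) = A := rfl

lemma unfold₁_sub [Sub α] (T T' : ι₁ → ι₂ → ι₃ → α) :
    unfold₁ (T - T') = unfold₁ T - unfold₁ T' := rfl

lemma fold₂_sub [Sub α] (A B : Matrix (ι₂ × ι₁) ι₃ α) : fold₂ (A - B) = fold₂ A - fold₂ B := rfl

end Unfoldings

variable {𝕜 : Type*} [RCLike 𝕜] {ι₁ ι₂ ι₃ : Type*} [Fintype ι₁] [Fintype ι₂] [Fintype ι₃]

noncomputable def frobSq (T : ι₁ → ι₂ → ι₃ → 𝕜) : ℝ :=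
  ∑ i, ∑ j, ∑ k, ‖T i j k‖ ^ 2

lemma frobSq_unfold₁ (T : ι₁ → ι₂ → ι₃ → 𝕜) : (unfold₁ T).frobSq = frobSq T := by
  simp only [Matrix.frobSq, frobSq, unfold₁, of_apply, Fintype.sum_prod_type]
  exact Finset.sum_congr rfl fun i _ => Finset.sum_comm

lemma frobSq_unfold₂ (T : ι₁ → ι₂ → ι₃ → 𝕜) : (unfold₂ T).frobSq = frobSq T := by
  simp only [Matrix.frobSq, frobSq, unfold₂, of_apply, Fintype.sum_prod_type]
  exact Finset.sum_comm

variable {r₁ r₂ : Type*} [Fintype r₁] [Fintype r₂]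

/-- `of fun j β => U₂ (i₂, j) β` is the row block `U₂((i₂-1)n₁+1 : i₂n₁, :)`. -/
def ttApprox (U₁ : Matrix ι₁ r₁ 𝕜) (U₂ : Matrix (ι₂ × ι₁) r₂ 𝕜) (X₂ : Matrix (ι₂ × ι₁) ι₃ 𝕜) :
    ι₁ → ι₂ → ι₃ → 𝕜 :=
  fun i₁ i₂ i₃ => (U₁ * U₁ᴴ * (of fun j β => U₂ (i₂, j) β) * U₂ᴴ * X₂) i₁ i₃

omit [Fintype ι₃] in
lemma unfold₁_ttApprox (U₁ : Matrix ι₁ r₁ 𝕜) (U₂ : Matrix (ι₂ × ι₁) r₂ 𝕜)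
    (X₂ : Matrix (ι₂ × ι₁) ι₃ 𝕜) :
    unfold₁ (ttApprox U₁ U₂ X₂) = U₁ * U₁ᴴ * unfold₁ (fold₂ (U₂ * U₂ᴴ * X₂)) := by
  ext i₁ ⟨i₃, i₂⟩
  simp only [unfold₁, fold₂, ttApprox, of_apply, Matrix.mul_assoc _ _ X₂]
  rw [Matrix.mul_assoc _ _ (U₂ᴴ * X₂), mul_apply, mul_apply]
  rfl

theorem frobSq_sub_ttApprox_le [DecidableEq r₁] (X : ι₁ → ι₂ → ι₃ → 𝕜)
    {U₁ : Matrix ι₁ r₁ 𝕜} (hU₁ : U₁ᴴ * U₁ = 1) (U₂ : Matrix (ι₂ × ι₁) r₂ 𝕜) :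
    frobSq (X - ttApprox U₁ U₂ (unfold₂ X)) ≤
      (unfold₁ X - U₁ * U₁ᴴ * unfold₁ X).frobSq +
        (unfold₂ X - U₂ * U₂ᴴ * unfold₂ X).frobSq := by
  set P₁ := U₁ * U₁ᴴ
  set R₂ := unfold₂ X - U₂ * U₂ᴴ * unfold₂ X
  have hP₁ : IsStarProjection P₁ := Matrix.isStarProjection_mul_conjTranspose hU₁
  have hsplit : unfold₁ (X - ttApprox U₁ U₂ (unfold₂ X)) =
      unfold₁ X - P₁ * unfold₁ X + P₁ * unfold₁ (fold₂ R₂) := by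
    rw [unfold₁_sub, unfold₁_ttApprox, fold₂_sub, unfold₁_sub, fold₂_unfold₂, Matrix.mul_sub]
    abel
  have hR₂ : (unfold₁ (fold₂ R₂)).frobSq = R₂.frobSq := by
    rw [frobSq_unfold₁, ← frobSq_unfold₂, unfold₂_fold₂]
  rw [← frobSq_unfold₁, hsplit, Matrix.frobSq_sub_mul_add_mul hP₁, ← hR₂]
  gcongr
  exact Matrix.frobSq_mul_le hP₁ _

end Tensor3

theorem stmt3_general {n₁ n₂ n₃ r₁ r₂ : ℕ} (ε : ℝ)
    (X : Fin n₁ → Fin n₂ → Fin n₃ → ℂ)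
    (X₁ : Matrix (Fin n₁) (Fin n₃ × Fin n₂) ℂ)
    (hX₁ : ∀ i p, X₁ i p = X i p.2 p.1)
    (X₂ : Matrix (Fin n₂ × Fin n₁) (Fin n₃) ℂ)
    (hX₂ : ∀ p k, X₂ p k = X p.2 p.1 k)
    (U₁ : Matrix (Fin n₁) (Fin r₁) ℂ) (hU₁on : U₁ᴴ * U₁ = 1)
    (U₂ : Matrix (Fin n₂ × Fin n₁) (Fin r₂) ℂ)
    (hacc₁ : frob (X₁ - U₁ * U₁ᴴ * X₁) ≤ ε / Real.sqrt 2 * frobT X)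
    (hacc₂ : frob (X₂ - U₂ * U₂ᴴ * X₂) ≤ ε / Real.sqrt 2 * frobT X)
    (Xt : Fin n₁ → Fin n₂ → Fin n₃ → ℂ)
    (hXt : ∀ i₁ i₂ i₃, Xt i₁ i₂ i₃ =
      (U₁ * U₁ᴴ * (Matrix.of fun (j : Fin n₁) (β : Fin r₂) => U₂ (i₂, j) β)
        * U₂ᴴ * X₂) i₁ i₃) :
    frobT (fun i j k => X i j k - Xt i j k) ≤ ε * frobT X := by
  obtain rfl : X₁ = Tensor3.unfold₁ X := ext hX₁
  obtain rfl : X₂ = Tensor3.unfold₂ X := ext hX₂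
  obtain rfl : Xt = Tensor3.ttApprox U₁ U₂ (Tensor3.unfold₂ X) := funext₃ hXt
  calc frobT (X - Tensor3.ttApprox U₁ U₂ (Tensor3.unfold₂ X))
      ≤ √2 * (ε / √2 * frobT X) :=
        Real.sqrt_le_sqrt_two_mul_of_le_add (Tensor3.frobSq_sub_ttApprox_le X hU₁on U₂)
          hacc₁ hacc₂
    _ = ε * frobT X := by field_simp

/-- Accuracy of Parallel-TTSVD for d = 3: if U₁, U₂ have orthonormal columns and
project the unfoldings X₁, X₂ to accuracy (ε/√2)‖X‖_F, then the TT approximation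
X̃_{i₁,i₂,i₃} = U₁(i₁,:) U₁ᴴ U₂((i₂-1)n₁+1:i₂n₁,:) U₂ᴴ X₂(:,i₃) satisfies
‖X − X̃‖_F ≤ ε‖X‖_F. Combined column-major indices are encoded as pairs with
the outer index first. -/
theorem stmt3 {n₁ n₂ n₃ r₁ r₂ : ℕ} (ε : ℝ) (hε : 0 < ε) (hε1 : ε < 1)
    (X : Fin n₁ → Fin n₂ → Fin n₃ → ℂ)
    (X₁ : Matrix (Fin n₁) (Fin n₃ × Fin n₂) ℂ)
    (hX₁ : ∀ i p, X₁ i p = X i p.2 p.1)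
    (X₂ : Matrix (Fin n₂ × Fin n₁) (Fin n₃) ℂ)
    (hX₂ : ∀ p k, X₂ p k = X p.2 p.1 k)
    (U₁ : Matrix (Fin n₁) (Fin r₁) ℂ) (hU₁on : U₁ᴴ * U₁ = 1)
    (U₂ : Matrix (Fin n₂ × Fin n₁) (Fin r₂) ℂ) (hU₂on : U₂ᴴ * U₂ = 1)
    (hacc₁ : frob (X₁ - U₁ * U₁ᴴ * X₁) ≤ ε / Real.sqrt 2 * frobT X)
    (hacc₂ : frob (X₂ - U₂ * U₂ᴴ * X₂) ≤ ε / Real.sqrt 2 * frobT X)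
    (Xt : Fin n₁ → Fin n₂ → Fin n₃ → ℂ)
    (hXt : ∀ i₁ i₂ i₃, Xt i₁ i₂ i₃ =
      (U₁ * U₁ᴴ * (Matrix.of fun (j : Fin n₁) (β : Fin r₂) => U₂ (i₂, j) β)
        * U₂ᴴ * X₂) i₁ i₃) :
    frobT (fun i j k => X i j k - Xt i j k) ≤ ε * frobT X :=
  stmt3_general ε X X₁ hX₁ X₂ hX₂ U₁ hU₁on U₂ hacc₁ hacc₂ Xt hXt
end

section
/- Let X ∈ ℂ^{m×n}, let Q ∈ ℂ^{m×r} have orthonormal columns, and let Ψ ∈ ℂ^{m×ℓ} be such that Ψ*Q has a left inverse (Ψ*Q)† with (Ψ*Q)†(Ψ*Q) = I_r. Define Z = Q(Ψ*Q)†Ψ*X. Then ‖Z − X‖_F² = ‖(Ψ*Q)†Ψ*(I − QQ*)X‖_F² + ‖(I − QQ*)X‖_F². -/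
/-!
Put `B = (I - QQᴴ)X` and `A = PΨᴴB`. Since `PΨᴴQ = I`, the sketch reproduces the component
`QQᴴX` exactly, so `Z - X = QA - B`. As `QᴴB = 0`, the two terms are orthogonal for the
trace inner product `⟨U, V⟩ = tr(UᴴV)`, and `Q` is an isometry, so Pythagoras finishes.
-/

open Matrix

section Frobenius

variable {m n r : Type*} [Fintype m] [Fintype n] [Fintype r]

theorem frob_sq_eq_re_trace (A : Matrix m n ℂ) : frob A ^ 2 = (trace (Aᴴ * A)).re := by
  rw [frob, Real.sq_sqrt (by positivity), trace, Finset.sum_comm]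
  simp only [diag, mul_apply, conjTranspose_apply, Complex.re_sum, Complex.star_def,
    ← Complex.normSq_eq_conj_mul_self, Complex.ofReal_re, Complex.normSq_eq_norm_sq]

theorem frob_sub_sq_of_conjTranspose_mul_eq_zero {A B : Matrix m n ℂ} (h : Aᴴ * B = 0) :
    frob (A - B) ^ 2 = frob A ^ 2 + frob B ^ 2 := by
  have h' : Bᴴ * A = 0 := by rw [← conjTranspose_conjTranspose A, ← conjTranspose_mul, h,
    conjTranspose_zero]
  rw [frob_sq_eq_re_trace, frob_sq_eq_re_trace, frob_sq_eq_re_trace, conjTranspose_sub,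
    Matrix.sub_mul, Matrix.mul_sub, Matrix.mul_sub, h, h', sub_zero, zero_sub,
    sub_neg_eq_add, trace_add, Complex.add_re]

theorem frob_mul_sq_of_conjTranspose_mul_self_eq_one [DecidableEq r] {Q : Matrix m r ℂ}
    (hQ : Qᴴ * Q = 1) (A : Matrix r n ℂ) : frob (Q * A) ^ 2 = frob A ^ 2 := by
  rw [frob_sq_eq_re_trace, frob_sq_eq_re_trace, conjTranspose_mul, Matrix.mul_assoc,
    ← Matrix.mul_assoc Qᴴ, hQ, Matrix.one_mul]

end Frobenius

/-- Error identity for one-pass sketching: if Q has orthonormal columns and P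
is a left inverse of ΨᴴQ, then for Z = Q P Ψᴴ X,
‖Z − X‖_F² = ‖P Ψᴴ (I − QQᴴ)X‖_F² + ‖(I − QQᴴ)X‖_F². -/
theorem stmt8 {m n r ℓ : ℕ}
    (X : Matrix (Fin m) (Fin n) ℂ) (Q : Matrix (Fin m) (Fin r) ℂ)
    (Ψ : Matrix (Fin m) (Fin ℓ) ℂ) (P : Matrix (Fin r) (Fin ℓ) ℂ)
    (hQ : Qᴴ * Q = 1) (hP : P * (Ψᴴ * Q) = 1)
    (Z : Matrix (Fin m) (Fin n) ℂ) (hZ : Z = Q * P * Ψᴴ * X) :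
    frob (Z - X) ^ 2
      = frob (P * Ψᴴ * ((1 - Q * Qᴴ) * X)) ^ 2 + frob ((1 - Q * Qᴴ) * X) ^ 2 := by
  set B := (1 - Q * Qᴴ) * X with hB
  set A := P * Ψᴴ * B with hA
  have hQB : Qᴴ * B = 0 := by
    rw [← Matrix.mul_assoc, Matrix.mul_sub, ← Matrix.mul_assoc, hQ, Matrix.one_mul,
      Matrix.mul_one, sub_self, Matrix.zero_mul]
  have hX : X = Q * (Qᴴ * X) + B := by
    rw [hB, Matrix.sub_mul, Matrix.one_mul, Matrix.mul_assoc, add_sub_cancel]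
  have hZX : Z - X = Q * A - B := by
    have hPQ (W : Matrix (Fin r) (Fin n) ℂ) : P * (Ψᴴ * (Q * W)) = W := by
      rw [← Matrix.mul_assoc Ψᴴ, ← Matrix.mul_assoc P, hP, Matrix.one_mul]
    rw [hZ, hX, hA]
    simp only [Matrix.mul_add, Matrix.mul_assoc, hPQ]
    abel
  have hQAB : (Q * A)ᴴ * B = 0 := by rw [conjTranspose_mul, Matrix.mul_assoc, hQB, Matrix.mul_zero]
  rw [hZX, frob_sub_sq_of_conjTranspose_mul_eq_zero hQAB,
    frob_mul_sq_of_conjTranspose_mul_self_eq_one hQ]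
end
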